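/- arXiv:2401.02103 — 6 statements merged into one kernel-verified Lean document; each statement's English description precedes it below -/
import Mathlib

section
/- A sequence (x_n) of real numbers converges statistically to x if and only if there exists a set M ⊆ ℕ of natural density 1 such that the subsequence (x_n)_{n ∈ M} converges to x in the usual sense. -/
open Filter
open scoped Classical

noncomputable def HasDensityZero (A : Set ℕ) : Prop :=
  Tendsto (fun n : ℕ => (((Finset.range n).filter (fun m => m + 1 ∈ A)).card : ℝ) / n)
    atTop (nhds 0)

/-!
The sets of density one form a filter on `ℕ`, and statistical convergence is convergence along
it. This filter is finer than `atTop` and has the diagonal property of a P-filter: for an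
increasing sequence `A₀ ⊆ A₁ ⊆ ⋯` of density-zero sets there is one density-zero set `B` that
contains every `Aₖ` up to finitely many points. Applied to the sets where `x` leaves the `k`-th
member of a decreasing neighbourhood basis of `x₀`, the complement of `B` is the required `M`.
-/

namespace HasDensityZero

noncomputable def ratio (A : Set ℕ) (n : ℕ) : ℝ :=
  (((Finset.range n).filter (fun m => m + 1 ∈ A)).card : ℝ) / n

theorem ratio_nonneg (A : Set ℕ) (n : ℕ) : 0 ≤ ratio A n := by
  unfold ratio; positivity

theorem ratio_le_ratio {A B : Set ℕ} {n : ℕ} (h : ∀ m ≤ n, m ∈ A → m ∈ B) :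
    ratio A n ≤ ratio B n := by
  refine div_le_div_of_nonneg_right (Nat.cast_le.2 <| Finset.card_le_card fun m hm => ?_)
    n.cast_nonneg
  simp only [Finset.mem_filter, Finset.mem_range] at hm ⊢
  exact ⟨hm.1, h _ hm.1 hm.2⟩

theorem ratio_union_le (A B : Set ℕ) (n : ℕ) : ratio (A ∪ B) n ≤ ratio A n + ratio B n := by
  unfold ratio
  rw [← add_div]
  gcongr
  exact_mod_cast (Finset.card_le_card (by intro m; simp [Finset.filter_or])).trans
    (Finset.card_union_le _ _)

theorem ratio_Iio_le (N n : ℕ) : ratio (Set.Iio N) n ≤ N / n := by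
  unfold ratio
  gcongr
  calc _ ≤ (Finset.range N).card :=
        Finset.card_le_card fun m hm => by
          simp only [Finset.mem_filter, Finset.mem_range, Set.mem_Iio] at hm ⊢; omega
    _ = N := Finset.card_range N

theorem mono {A B : Set ℕ} (hB : HasDensityZero B) (hAB : A ⊆ B) : HasDensityZero A :=
  squeeze_zero (ratio_nonneg A) (fun _ => ratio_le_ratio fun _ _ hm => hAB hm) hB

theorem union {A B : Set ℕ} (hA : HasDensityZero A) (hB : HasDensityZero B) :
    HasDensityZero (A ∪ B) :=
  squeeze_zero (ratio_nonneg _) (ratio_union_le A B) (add_zero (0 : ℝ) ▸ hA.add hB)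

theorem Iio (N : ℕ) : HasDensityZero (Set.Iio N) :=
  squeeze_zero (ratio_nonneg _) (ratio_Iio_le N) (tendsto_const_div_atTop_nhds_zero_nat _)

end HasDensityZero

open HasDensityZero in
theorem exists_hasDensityZero_eventually_superset {A : ℕ → Set ℕ} (hmono : Monotone A)
    (hA : ∀ k, HasDensityZero (A k)) :
    ∃ B : Set ℕ, HasDensityZero B ∧ ∀ k, ∀ᶠ m in atTop, m ∈ A k → m ∈ B := by
  have hN : ∀ k : ℕ, ∃ N, ∀ n ≥ N, ratio (A k) n < 1 / (k + 1) ∧ k ≤ n := fun k =>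
    eventually_atTop.1 <|
      ((hA k).eventually (gt_mem_nhds (by positivity))).and (eventually_ge_atTop k)
  choose N hN using hN
  have hkN : ∀ k, k ≤ N k := fun k => (hN k _ le_rfl).2
  -- `B` keeps the part of each `A i` beyond `N i`. Below `n`, it lies inside `A j` for the
  -- largest `j` with `N j ≤ n`, and the density of `A j` is already `< 1/(j+1)` at `n`.
  refine ⟨{m | ∃ i, N i ≤ m ∧ m ∈ A i}, ?_, fun k => ?_⟩
  · refine tendsto_order.2 ⟨fun ε hε => .of_forall fun n => hε.trans_le (ratio_nonneg _ n),
      fun ε hε => ?_⟩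
    obtain ⟨k, hk⟩ := exists_nat_one_div_lt hε
    filter_upwards [eventually_ge_atTop (N k)] with n hn
    have hk_le : k ≤ n := (hkN k).trans hn
    let P := fun i => N i ≤ n
    set j := Nat.findGreatest P n
    have hBA : ∀ m ≤ n, m ∈ {m | ∃ i, N i ≤ m ∧ m ∈ A i} → m ∈ A j := by
      rintro m hm ⟨i, hi, hmi⟩
      exact hmono (Nat.le_findGreatest (P := P) ((hkN i).trans (hi.trans hm)) (hi.trans hm)) hmi
    calc _ ≤ ratio (A j) n := ratio_le_ratio hBA
      _ < 1 / (j + 1) := (hN j n (Nat.findGreatest_spec (P := P) hk_le hn)).1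
      _ ≤ 1 / (k + 1) := by gcongr; exact Nat.le_findGreatest (P := P) hk_le hn
      _ < ε := hk
  · filter_upwards [eventually_ge_atTop (N k)] with m hm hmA using ⟨k, hm, hmA⟩

noncomputable def densityOneFilter : Filter ℕ :=
  comk HasDensityZero ((HasDensityZero.Iio 0).mono (Set.empty_subset _))
    (fun _ ht _ hst => ht.mono hst) (fun _ hs _ ht => hs.union ht)

theorem mem_densityOneFilter {s : Set ℕ} : s ∈ densityOneFilter ↔ HasDensityZero sᶜ :=
  Iff.rfl

theorem densityOneFilter_le_atTop : densityOneFilter ≤ atTop :=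
  atTop_basis.ge_iff.2 fun N _ => by
    rw [mem_densityOneFilter, Set.compl_Ici]
    exact HasDensityZero.Iio N

theorem tendsto_densityOneFilter_nhds_iff {α : Type*} [PseudoMetricSpace α] {x : ℕ → α}
    {a : α} :
    Tendsto x densityOneFilter (nhds a) ↔ ∀ ε > 0, HasDensityZero {n | ε ≤ dist (x n) a} := by
  simp only [Metric.tendsto_nhds, Filter.Eventually, mem_densityOneFilter, Set.compl_ofPred,
    not_lt]

theorem tendsto_densityOneFilter_iff_exists_tendsto_inf_principal {α : Type*} {l : Filter α}
    [l.IsCountablyGenerated] {x : ℕ → α} :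
    Tendsto x densityOneFilter l ↔
      ∃ M : Set ℕ, HasDensityZero Mᶜ ∧ Tendsto x (atTop ⊓ 𝓟 M) l := by
  refine ⟨fun h => ?_, fun ⟨M, hM, hx⟩ => hx.mono_left (le_inf densityOneFilter_le_atTop
    (le_principal_iff.2 hM))⟩
  obtain ⟨V, hV⟩ := l.exists_antitone_basis
  obtain ⟨B, hB, hAB⟩ :=
    exists_hasDensityZero_eventually_superset (A := fun k => (x ⁻¹' V k)ᶜ)
      (fun _ _ hij => Set.compl_subset_compl.2 (Set.preimage_mono (hV.antitone hij)))
      (fun k => h (hV.mem k))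
  refine ⟨Bᶜ, by rwa [compl_compl], hV.tendsto_right_iff.2 fun k _ => ?_⟩
  rw [eventually_inf_principal]
  filter_upwards [hAB k] with m hm hmB
  exact not_not.1 (mt hm hmB)

/-- A real sequence `(x n)` converges statistically to `x` iff there is a set
`M ⊆ ℕ` of natural density `1` such that the subsequence indexed by `M`
converges to `x` in the usual sense. -/
theorem statConv_iff_conv_along_density_one (x : ℕ → ℝ) (x₀ : ℝ) :
    (∀ ε : ℝ, 0 < ε → HasDensityZero {n : ℕ | ε ≤ |x n - x₀|}) ↔
    ∃ M : Set ℕ, HasDensityZero Mᶜ ∧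
      Tendsto x (atTop ⊓ Filter.principal M) (nhds x₀) := by
  simp_rw [← Real.dist_eq]
  rw [← tendsto_densityOneFilter_nhds_iff,
    tendsto_densityOneFilter_iff_exists_tendsto_inf_principal]
end

section
/- For any ideal I on ℕ, if A ⊆ 𝕋 is an I-Arbault set and G is the subgroup of 𝕋 generated by A, then G is an I-Arbault set. -/
/-- `X ⊆ 𝕋` is an `I`-Arbault set: there is a strictly increasing sequence of
naturals `(a n)` such that `‖a n • x‖` `I`-converges to `0` for every `x ∈ X`. -/
def IsIArbault (I : Set (Set ℕ)) (X : Set (AddCircle (1 : ℝ))) : Prop :=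
  ∃ a : ℕ → ℕ, StrictMono a ∧
    ∀ x ∈ X, ∀ ε : ℝ, 0 < ε → {n : ℕ | ε ≤ ‖(a n : ℤ) • x‖} ∈ I

/-- For any ideal `I` on `ℕ`, if `A` is an `I`-Arbault set then the subgroup of
`𝕋` generated by `A` is an `I`-Arbault set. -/
theorem iArbault_generated_subgroup
    (I : Set (Set ℕ))
    (hne : I.Nonempty)
    (huniv : (Set.univ : Set ℕ) ∉ I)
    (hunion : ∀ A B : Set ℕ, A ∈ I → B ∈ I → A ∪ B ∈ I)
    (hsubset : ∀ A B : Set ℕ, A ⊆ B → B ∈ I → A ∈ I)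
    (A : Set (AddCircle (1 : ℝ))) (hA : IsIArbault I A) :
    IsIArbault I (AddSubgroup.closure A : Set (AddCircle (1 : ℝ))) := by
  obtain ⟨a, ha, hconv⟩ := hA
  obtain ⟨S, hS⟩ := hne
  have hempty : (∅ : Set ℕ) ∈ I := hsubset ∅ S (Set.empty_subset S) hS
  refine ⟨a, ha, ?_⟩
  intro x hx
  refine AddSubgroup.closure_induction (p := fun x _ =>
      ∀ ε : ℝ, 0 < ε → {n : ℕ | ε ≤ ‖(a n : ℤ) • x‖} ∈ I) hconv ?_ ?_ ?_ hx
  · intro ε hε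
    refine hsubset _ ∅ ?_ hempty
    intro n hn
    simp only [Set.mem_setOf_eq, smul_zero, norm_zero] at hn
    exact absurd hn (not_le.mpr hε)
  · intro y z hy hz ihy ihz ε hε
    have h1 := ihy (ε / 2) (by linarith)
    have h2 := ihz (ε / 2) (by linarith)
    refine hsubset _ _ ?_ (hunion _ _ h1 h2)
    intro n hn
    simp only [Set.mem_setOf_eq, smul_add] at hn ⊢
    by_contra hc
    simp only [Set.mem_union, Set.mem_setOf_eq, not_or, not_le] at hc
    obtain ⟨hc1, hc2⟩ := hc
    have := norm_add_le ((a n : ℤ) • y) ((a n : ℤ) • z)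
    linarith
  · intro y hy ihy ε hε
    have := ihy ε hε
    refine hsubset _ _ ?_ this
    intro n hn
    simp only [Set.mem_setOf_eq, smul_neg, norm_neg] at hn ⊢
    exact hn
end

section
/- Let I be an ideal on ℕ, (a_n) a strictly increasing sequence of naturals, and (r_n) a decreasing sequence of positive reals with ∑ r_n = ∞ such that for every A ⊆ ℕ, ∑_{n∈A} r_n < ∞ implies A ∈ I. If x ∈ 𝕋 satisfies ∑_{n=1}^∞ r_n ‖a_n x‖ < ∞, then (a_n x) I-converges to 0 in 𝕋. Consequently every set in N^I is an I-Arbault set. -/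
/-- Let `I` be an ideal on `ℕ`, `(a n)` a strictly increasing sequence of
naturals, `(r n)` a decreasing sequence of positive reals with `∑ r n = ∞`
such that summability of `r` on `A` forces `A ∈ I`.  If
`∑ r n * ‖a n • x‖ < ∞` then `(a n • x)` `I`-converges to `0`; consequently
every set `X` in `N^I` (witnessed by such `a`, `r`) is an `I`-Arbault set. -/
theorem nI_subset_iArbault
    (I : Set (Set ℕ))
    (hne : I.Nonempty)
    (huniv : (Set.univ : Set ℕ) ∉ I)
    (hunion : ∀ A B : Set ℕ, A ∈ I → B ∈ I → A ∪ B ∈ I)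
    (hsubset : ∀ A B : Set ℕ, A ⊆ B → B ∈ I → A ∈ I)
    (a : ℕ → ℕ) (hamono : StrictMono a)
    (r : ℕ → ℝ) (hrpos : ∀ n, 0 < r n) (hrdec : Antitone r)
    (hrdiv : ¬ Summable r)
    (hrI : ∀ A : Set ℕ, Summable (A.indicator r) → A ∈ I) :
    (∀ x : AddCircle (1 : ℝ), Summable (fun n => r n * ‖(a n : ℤ) • x‖) →
      ∀ ε : ℝ, 0 < ε → {n : ℕ | ε ≤ ‖(a n : ℤ) • x‖} ∈ I) ∧
    (∀ X : Set (AddCircle (1 : ℝ)),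
      (∀ x ∈ X, Summable (fun n => r n * ‖(a n : ℤ) • x‖)) → IsIArbault I X) := by
  have main : ∀ x : AddCircle (1 : ℝ), Summable (fun n => r n * ‖(a n : ℤ) • x‖) →
      ∀ ε : ℝ, 0 < ε → {n : ℕ | ε ≤ ‖(a n : ℤ) • x‖} ∈ I := by
    intro x hx ε hε
    apply hrI
    have hsum : Summable (fun n => ε⁻¹ * (r n * ‖(a n : ℤ) • x‖)) := hx.mul_left _
    refine Summable.of_nonneg_of_le ?_ ?_ hsum
    · intro n
      exact Set.indicator_nonneg (fun n _ => (hrpos n).le) n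
    · intro n
      by_cases hn : n ∈ {n : ℕ | ε ≤ ‖(a n : ℤ) • x‖}
      · rw [Set.indicator_of_mem hn]
        have h1 : ε ≤ ‖(a n : ℤ) • x‖ := hn
        have := mul_le_mul_of_nonneg_left h1 (hrpos n).le
        calc r n = ε⁻¹ * (r n * ε) := by field_simp
          _ ≤ ε⁻¹ * (r n * ‖(a n : ℤ) • x‖) := by
              apply mul_le_mul_of_nonneg_left this (inv_nonneg.mpr hε.le)
      · rw [Set.indicator_of_notMem hn]
        exact mul_nonneg (inv_nonneg.mpr hε.le) (mul_nonneg (hrpos n).le (norm_nonneg _))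
  exact ⟨main, fun X hX => ⟨a, hamono, fun x hx => main x (hX x hx)⟩⟩
end

section
/- Let q ≥ 2 and 1 ≤ l ≤ q−1 be naturals with 2l ≤ q, and set c = ⌊q/(2l)⌋. Then 1/4 ≤ {c·l/q} ≤ 1/2, where {·} denotes fractional part. -/
/-- Digit-choice inequality: for naturals `q ≥ 2` and `1 ≤ l ≤ q - 1` with
`2l ≤ q`, setting `c = ⌊q / (2l)⌋`, the fractional part of `c·l/q` lies in
`[1/4, 1/2]`. -/
theorem fract_digit_choice (q l : ℕ) (hq : 2 ≤ q) (hl : 1 ≤ l) (hl' : l ≤ q - 1)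
    (h2l : 2 * l ≤ q) :
    1 / 4 ≤ Int.fract (((q / (2 * l) : ℕ) : ℝ) * l / q) ∧
      Int.fract (((q / (2 * l) : ℕ) : ℝ) * l / q) ≤ 1 / 2 := by
  set c : ℕ := q / (2 * l) with hc
  have hlpos : 0 < 2 * l := by omega
  have hc1 : 1 ≤ c := Nat.one_le_div_iff hlpos |>.mpr h2l
  have hmod := Nat.div_add_mod q (2 * l)
  rw [← hc] at hmod
  have hmlt : q % (2 * l) < 2 * l := Nat.mod_lt q hlpos
  have hle : 2 * l * c ≤ q := by omega
  have hlt : q < 2 * l * (c + 1) := by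
    have : 2 * l * (c + 1) = 2 * l * c + 2 * l := by ring
    omega
  -- so q ≤ 4 * l * c
  have h4 : q ≤ 4 * l * c := by nlinarith [hc1, hlt]
  have hqR : (0:ℝ) < q := by positivity
  have hx14 : (1:ℝ)/4 ≤ (c : ℝ) * l / q := by
    rw [div_le_div_iff₀ (by norm_num) hqR] at *
    push_cast
    have : (q:ℝ) ≤ 4 * l * c := by exact_mod_cast h4
    nlinarith
  have hx12 : (c : ℝ) * l / q ≤ 1/2 := by
    rw [div_le_div_iff₀ hqR (by norm_num)]
    have : (2 * l * c : ℝ) ≤ q := by exact_mod_cast hle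
    nlinarith
  have hfract : Int.fract ((c : ℝ) * l / q) = (c : ℝ) * l / q := by
    apply Int.fract_eq_self.mpr
    constructor
    · linarith
    · linarith
  rw [hfract]
  exact ⟨hx14, hx12⟩
end

section
/- Let (u_n) be an arithmetic sequence, x ∈ 𝕋 with canonical digits supported on a set {k_i + 1 : i ∈ ℕ} (so x = ∑_i c_{k_i+1}/u_{k_i+1} with 0 ≤ c_{k_i+1} < q_{k_i+1}), and let j be an integer with k_{i−1} < j ≤ k_i. Then the fractional part of u_j·x is at most u_j/u_{k_i}, and hence |sin(π u_j x)| ≤ π u_j / u_{k_i}. -/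
/-!
Multiplying `x` by `u j` turns every digit term `c n / u n` with `n ≤ j` into an integer, since
`u n ∣ u j`. The digits strictly between `j` and `k i + 1` vanish, so what remains is `u j` times the
tail of the series from `k i + 1`. A digit satisfies `c (n+1) / u (n+1) ≤ 1 / u n - 1 / u (n+1)`,
so this tail telescopes to at most `1 / u (k i)`. The sine bound then follows from
`|sin (π y)| ≤ π · fract y`.
-/

open Finset

theorem Int.fract_natCast_add_le {R : Type*} [Ring R] [LinearOrder R] [IsStrictOrderedRing R]
    [FloorRing R] (m : ℕ) {t : R} (ht : 0 ≤ t) : Int.fract (m + t) ≤ t := by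
  rw [Int.fract_natCast_add, ← Int.self_sub_floor, sub_le_self_iff]
  exact_mod_cast Int.floor_nonneg.2 ht

theorem Real.abs_sin_pi_mul_le_pi_mul_fract (y : ℝ) :
    |Real.sin (Real.pi * y)| ≤ Real.pi * Int.fract y := by
  have hy : Real.pi * y = Real.pi * Int.fract y + ⌊y⌋ * Real.pi := by
    rw [← Int.self_sub_floor]
    ring
  rw [hy, Real.sin_add_int_mul_pi, abs_mul, abs_neg_one_zpow, one_mul]
  calc |Real.sin (Real.pi * Int.fract y)| ≤ |Real.pi * Int.fract y| := Real.abs_sin_le_abs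
    _ = Real.pi * Int.fract y := abs_of_nonneg (mul_nonneg Real.pi_pos.le (Int.fract_nonneg y))

theorem sum_range_le_of_le_sub {G : Type*} [AddCommGroup G] [PartialOrder G]
    [IsOrderedAddMonoid G] {f a : ℕ → G} (hfa : ∀ n, f n ≤ a n - a (n + 1)) (ha : ∀ n, 0 ≤ a n)
    (N : ℕ) : ∑ n ∈ range N, f n ≤ a 0 :=
  calc ∑ n ∈ range N, f n ≤ ∑ n ∈ range N, (a n - a (n + 1)) := sum_le_sum fun n _ => hfa n
    _ = a 0 - a N := sum_range_sub' a N
    _ ≤ a 0 := sub_le_self _ (ha N)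

theorem tsum_nat_add_eq_of_eq_zero {G : Type*} [AddCommGroup G] [TopologicalSpace G]
    [IsTopologicalAddGroup G] [T2Space G] {f : ℕ → G} {a b : ℕ} (hab : a ≤ b)
    (hf : ∀ n, a ≤ n → n < b → f n = 0) (hs : Summable f) :
    ∑' m, f (m + a) = ∑' m, f (m + b) := by
  obtain ⟨d, rfl⟩ := Nat.exists_eq_add_of_le hab
  have hzero : ∑ m ∈ range d, f (m + a) = 0 :=
    sum_eq_zero fun m hm => hf _ (by omega) (by simp at hm; omega)
  rw [← ((summable_nat_add_iff a).2 hs).sum_add_tsum_nat_add d, hzero, zero_add]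
  simp only [add_assoc, add_comm d a]

theorem Nat.cast_div_le_one_div_sub_one_div {d a b : ℕ} (ha : 0 < a) (hd : d < b / a) :
    (d : ℝ) / b ≤ 1 / a - 1 / b := by
  have hdab : (d + 1) * a ≤ b := (Nat.le_div_iff_mul_le ha).1 hd
  have hb : (0 : ℝ) < b := by
    exact_mod_cast ha.trans_le (le_of_mul_le_of_one_le_right hdab (by omega))
  rw [le_sub_iff_add_le, ← add_div, div_le_div_iff₀ hb (by exact_mod_cast ha), one_mul]
  exact_mod_cast hdab

section ArithmeticSequence

variable {u : ℕ → ℕ}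

theorem pos_of_strictMono_of_dvd_succ (hmono : StrictMono u) (hdvd : ∀ n, u n ∣ u (n + 1))
    (n : ℕ) : 0 < u n := by
  have h0 : 0 < u 0 := by
    refine Nat.pos_of_ne_zero fun h => ?_
    have h1 := hmono Nat.zero_lt_one
    have h2 : u 1 = 0 := by simpa [h] using hdvd 0
    omega
  exact h0.trans_le (hmono.monotone n.zero_le)

theorem natCast_mul_sum_range_div_eq (hpos : ∀ n, 0 < u n) (hdvd : ∀ n, u n ∣ u (n + 1))
    (c : ℕ → ℕ) (j : ℕ) :
    (u j : ℝ) * ∑ n ∈ range (j + 1), (c n : ℝ) / u n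
      = ((∑ n ∈ range (j + 1), u j / u n * c n : ℕ) : ℝ) := by
  rw [mul_sum]
  push_cast
  refine sum_congr rfl fun n hn => ?_
  have hnj : u n ∣ u j :=
    Nat.rel_of_forall_rel_succ_of_le (· ∣ ·) hdvd (Nat.lt_succ_iff.1 (mem_range.1 hn))
  rw [Nat.cast_div hnj (by exact_mod_cast (hpos n).ne')]
  ring

variable {c : ℕ → ℕ}

theorem sum_range_digit_tail_le (hpos : ∀ n, 0 < u n)
    (hdigit : ∀ n, 1 ≤ n → c n < u n / u (n - 1)) (K N : ℕ) :
    ∑ m ∈ range N, (c (m + (K + 1)) : ℝ) / u (m + (K + 1)) ≤ 1 / u K := by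
  have hfa (m : ℕ) : (c (m + (K + 1)) : ℝ) / u (m + (K + 1))
      ≤ 1 / u (m + K) - 1 / u (m + 1 + K) := by
    have h := hdigit (m + K + 1) (by omega)
    rw [Nat.add_sub_cancel] at h
    rw [← add_assoc, add_right_comm m 1 K]
    exact Nat.cast_div_le_one_div_sub_one_div (hpos _) h
  simpa using sum_range_le_of_le_sub hfa (fun _ => by positivity) N

theorem summable_digits (hpos : ∀ n, 0 < u n) (hdigit : ∀ n, 1 ≤ n → c n < u n / u (n - 1)) :
    Summable fun n => (c n : ℝ) / u n :=
  (summable_nat_add_iff 1).1 <|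
    summable_of_sum_range_le (fun _ => by positivity) (sum_range_digit_tail_le hpos hdigit 0)

theorem tsum_digit_tail_le (hpos : ∀ n, 0 < u n) (hdigit : ∀ n, 1 ≤ n → c n < u n / u (n - 1))
    (K : ℕ) : ∑' m, (c (m + (K + 1)) : ℝ) / u (m + (K + 1)) ≤ 1 / u K :=
  Real.tsum_le_of_sum_range_le (fun _ => by positivity) (sum_range_digit_tail_le hpos hdigit K)

end ArithmeticSequence

theorem digit_eq_zero_of_lt_of_le {k c : ℕ → ℕ} (hkmono : StrictMono k)
    (hcsupp : ∀ n, c n ≠ 0 → ∃ i, n = k i + 1) {i j n : ℕ} (hj : k (i - 1) < j) (hjn : j < n)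
    (hn : n ≤ k i) : c n = 0 := by
  by_contra h
  obtain ⟨t, rfl⟩ := hcsupp n h
  rcases lt_or_ge t i with hti | hit
  · have := hkmono.monotone (Nat.le_sub_one_of_lt hti)
    omega
  · have := hkmono.monotone hit
    omega

theorem fract_and_sin_tail_estimate_general
    (u : ℕ → ℕ) (humono : StrictMono u)
    (hudvd : ∀ n, u n ∣ u (n + 1))
    (k : ℕ → ℕ) (hkmono : StrictMono k)
    (c : ℕ → ℕ)
    (hcsupp : ∀ n, c n ≠ 0 → ∃ i, n = k i + 1)
    (hcdigit : ∀ n, 1 ≤ n → c n < u n / u (n - 1))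
    (x : ℝ) (hx : x = ∑' n : ℕ, (c n : ℝ) / u n)
    (i j : ℕ) (hj1 : k (i - 1) < j) (hj2 : j ≤ k i) :
    Int.fract ((u j : ℝ) * x) ≤ (u j : ℝ) / u (k i) ∧
      |Real.sin (Real.pi * u j * x)| ≤ Real.pi * u j / u (k i) := by
  have hpos := pos_of_strictMono_of_dvd_succ humono hudvd
  have hsumm := summable_digits hpos hcdigit
  have htail : ∑' m, (c (m + (j + 1)) : ℝ) / u (m + (j + 1))
      = ∑' m, (c (m + (k i + 1)) : ℝ) / u (m + (k i + 1)) :=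
    tsum_nat_add_eq_of_eq_zero (f := fun n => (c n : ℝ) / u n) (by omega)
      (fun n hjn hn => by simp [digit_eq_zero_of_lt_of_le hkmono hcsupp hj1 hjn (by omega)]) hsumm
  have hsplit : (u j : ℝ) * x = ((∑ n ∈ range (j + 1), u j / u n * c n : ℕ) : ℝ)
      + u j * ∑' m, (c (m + (k i + 1)) : ℝ) / u (m + (k i + 1)) := by
    rw [hx, ← hsumm.sum_add_tsum_nat_add (j + 1), mul_add,
      natCast_mul_sum_range_div_eq hpos hudvd, htail]
  have hfract : Int.fract ((u j : ℝ) * x) ≤ u j / u (k i) := by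
    rw [hsplit, div_eq_mul_one_div]
    refine (Int.fract_natCast_add_le _ (by positivity)).trans ?_
    gcongr
    exact tsum_digit_tail_le hpos hcdigit (k i)
  refine ⟨hfract, ?_⟩
  calc |Real.sin (Real.pi * u j * x)| ≤ Real.pi * Int.fract ((u j : ℝ) * x) := by
        rw [mul_assoc]
        exact Real.abs_sin_pi_mul_le_pi_mul_fract _
    _ ≤ Real.pi * (u j / u (k i)) := by gcongr
    _ = Real.pi * u j / u (k i) := (mul_div_assoc _ _ _).symm

/-- Tail estimate: let `u` be an arithmetic sequence (`u 0 = 1`, strictly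
increasing, `u n ∣ u (n+1)`, ratios `q n = u n / u (n-1)`), `k` a strictly
increasing sequence of indices, and `x = ∑_i c (k i + 1) / u (k i + 1)` with
canonical digits supported on `{k i + 1 : i}` (so `0 ≤ c (k i + 1) < q (k i + 1)`).
If `1 ≤ i` and `k (i-1) < j ≤ k i`, then the fractional part of `u j * x` is at
most `u j / u (k i)`, and hence `|sin (π u j x)| ≤ π u j / u (k i)`. -/
theorem fract_and_sin_tail_estimate
    (u : ℕ → ℕ) (hu0 : u 0 = 1) (humono : StrictMono u)
    (hudvd : ∀ n, u n ∣ u (n + 1))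
    (k : ℕ → ℕ) (hkmono : StrictMono k)
    (c : ℕ → ℕ)
    (hcsupp : ∀ n, c n ≠ 0 → ∃ i, n = k i + 1)
    (hcdigit : ∀ n, 1 ≤ n → c n < u n / u (n - 1))
    (x : ℝ) (hx : x = ∑' n : ℕ, (c n : ℝ) / u n)
    (i j : ℕ) (hi : 1 ≤ i) (hj1 : k (i - 1) < j) (hj2 : j ≤ k i) :
    Int.fract ((u j : ℝ) * x) ≤ (u j : ℝ) / u (k i) ∧
      |Real.sin (Real.pi * u j * x)| ≤ Real.pi * u j / u (k i) :=
  fract_and_sin_tail_estimate_general u humono hudvd k hkmono c hcsupp hcdigit x hx i j hj1 hj2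
end

section
/- For an arithmetic sequence (u_n), increasing indices (k_i) with ∑ 1/k_i < ∞, and x ∈ 𝕋 with canonical support {k_i + 1 : i ∈ ℕ}, the series ∑_{n=1}^∞ (1/n)·|sin(π u_n x)| converges. In particular x lies in the N-set {y : ∑ (1/n)|sin(u_n π y)| < ∞}. -/
/-!
Let `K n` be the first `k i` with `n ≤ k i`. No digit of `x` sits strictly between `n` and
`K n`, so `u n * x` is an integer plus `u n` times the tail `∑_{m > K n} c m / u m`, and the
digit bound `c m / u m ≤ 1 / u (m-1) - 1 / u m` telescopes to make that tail at most
`1 / u (K n)`. Since `u` at least doubles at each step, `|sin (π u n x)| ≤ π 2^{n - K n}`.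
Finally `1 / n ≤ (j + 1) / K n` with `j = K n - n`, and `n ↦ (i, j)` (where `K n = k i`) is
injective, so the series is dominated by the summable double series
`∑_{i,j} π (j + 1) 2^{-j} / k i`.
-/

open Finset Real

theorem summable_and_tsum_le_of_le_sub_succ {a b : ℕ → ℝ} (ha : ∀ n, 0 ≤ a n)
    (hb : ∀ n, 0 ≤ b n) (hab : ∀ n, a n ≤ b n - b (n + 1)) :
    Summable a ∧ ∑' n, a n ≤ b 0 := by
  have hpartial (N : ℕ) : ∑ n ∈ range N, a n ≤ b 0 :=
    calc ∑ n ∈ range N, a n ≤ ∑ n ∈ range N, (b n - b (n + 1)) :=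
          sum_le_sum fun n _ => hab n
      _ = b 0 - b N := sum_range_sub' b N
      _ ≤ b 0 := sub_le_self _ (hb N)
  exact ⟨summable_of_sum_range_le ha hpartial, Real.tsum_le_of_sum_range_le ha hpartial⟩

theorem summable_succ_mul_geometric_two :
    Summable fun j : ℕ => ((j : ℝ) + 1) * (1 / 2) ^ j := by
  simp only [add_mul, one_mul]
  exact (hasSum_coe_mul_geometric_of_norm_lt_one (by norm_num)).summable.add
    summable_geometric_two

theorem one_div_le_sub_add_one_div {n N : ℕ} (hn : n ≠ 0) (hnN : n ≤ N) :
    (1 : ℝ) / n ≤ (((N - n : ℕ) : ℝ) + 1) / N := by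
  obtain ⟨j, rfl⟩ := Nat.exists_eq_add_of_le hnN
  have hn' : (1 : ℝ) ≤ n := by exact_mod_cast Nat.one_le_iff_ne_zero.2 hn
  rw [Nat.add_sub_cancel_left, div_le_div_iff₀ (by positivity) (by positivity)]
  push_cast
  nlinarith [(j.cast_nonneg : (0 : ℝ) ≤ j)]

-- An arithmetic sequence in the sense of Cantor series expansions, not an arithmetic progression.
structure IsArithSeq (u : ℕ → ℕ) : Prop where
  strictMono : StrictMono u
  dvd_succ : ∀ n, u n ∣ u (n + 1)

namespace IsArithSeq

variable {u : ℕ → ℕ}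

theorem pos (hu : IsArithSeq u) (n : ℕ) : 0 < u n := by
  rcases n with _ | n
  · refine Nat.pos_of_ne_zero fun h => ?_
    have h1 := hu.dvd_succ 0
    rw [h, zero_dvd_iff] at h1
    exact (hu.strictMono (Nat.lt_succ_self 0)).ne' (by rw [h, h1])
  · exact (Nat.zero_le _).trans_lt (hu.strictMono n.succ_pos)

theorem dvd_of_le (hu : IsArithSeq u) {m n : ℕ} (h : m ≤ n) : u m ∣ u n := by
  induction n, h using Nat.le_induction with
  | base => rfl
  | succ n _ ih => exact ih.trans (hu.dvd_succ n)

theorem mul_two_pow_le (hu : IsArithSeq u) (n j : ℕ) : u n * 2 ^ j ≤ u (n + j) := by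
  induction j with
  | zero => simp
  | succ j ih =>
    obtain ⟨q, hq⟩ := hu.dvd_succ (n + j)
    have hlt := hu.strictMono (Nat.lt_succ_self (n + j))
    have hq2 : 2 ≤ q := by
      by_contra! h
      interval_cases q <;> simp_all
    calc u n * 2 ^ (j + 1) = u n * 2 ^ j * 2 := by ring
      _ ≤ u (n + j) * q := Nat.mul_le_mul ih hq2
      _ = u (n + (j + 1)) := hq.symm

theorem div_le_half_pow (hu : IsArithSeq u) {n N : ℕ} (h : n ≤ N) :
    (u n : ℝ) / u N ≤ (1 / 2) ^ (N - n) := by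
  have hle : ((u n * 2 ^ (N - n) : ℕ) : ℝ) ≤ u N := by
    exact_mod_cast Nat.add_sub_cancel' h ▸ hu.mul_two_pow_le n (N - n)
  push_cast at hle
  rw [div_le_iff₀ (by exact_mod_cast hu.pos N), one_div_pow, one_div_mul_eq_div,
    le_div_iff₀ (by positivity)]
  exact hle

theorem digit_div_le (hu : IsArithSeq u) {m d : ℕ} (hd : d < u (m + 1) / u m) :
    (d : ℝ) / u (m + 1) ≤ 1 / u m - 1 / u (m + 1) := by
  have h : ((d + 1) * u m : ℕ) ≤ (u (m + 1) : ℝ) := by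
    exact_mod_cast (Nat.le_div_iff_mul_le (hu.pos m)).1 hd
  have hm : (0 : ℝ) < u m := by exact_mod_cast hu.pos m
  have hm1 : (0 : ℝ) < u (m + 1) := by exact_mod_cast hu.pos (m + 1)
  push_cast at h
  rw [div_sub_div _ _ hm.ne' hm1.ne', div_le_div_iff₀ hm1 (by positivity)]
  nlinarith

variable {c : ℕ → ℕ}

theorem tail_digits (hu : IsArithSeq u) (hc : ∀ m, c (m + 1) < u (m + 1) / u m) (N : ℕ) :
    Summable (fun m => (c (m + N + 1) : ℝ) / u (m + N + 1)) ∧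
      ∑' m, (c (m + N + 1) : ℝ) / u (m + N + 1) ≤ 1 / u N := by
  simpa using summable_and_tsum_le_of_le_sub_succ (b := fun m => 1 / (u (m + N) : ℝ))
    (fun m => by positivity) (fun m => by positivity)
    fun m => by
      rw [Nat.add_right_comm m 1 N]
      exact hu.digit_div_le (hc (m + N))

theorem summable_digits (hu : IsArithSeq u) (hc : ∀ m, c (m + 1) < u (m + 1) / u m) :
    Summable fun m => (c m : ℝ) / u m :=
  (summable_nat_add_iff 1).1 (by simpa using (hu.tail_digits hc 0).1)

theorem abs_sin_pi_mul_tsum_le (hu : IsArithSeq u) (hc : ∀ m, c (m + 1) < u (m + 1) / u m)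
    {n N : ℕ} (hzero : ∀ m, n < m → m ≤ N → c m = 0) :
    |sin (π * u n * ∑' m, (c m : ℝ) / u m)| ≤ π * (u n / u N) := by
  obtain ⟨-, hTle⟩ := hu.tail_digits hc N
  set T := ∑' m, (c (m + N + 1) : ℝ) / u (m + N + 1)
  have hsplit : ∑ m ∈ range (N + 1), (c m : ℝ) / u m + T = ∑' m, (c m : ℝ) / u m :=
    (hu.summable_digits hc).sum_add_tsum_nat_add (N + 1)
  have hint : (u n : ℝ) * ∑ m ∈ range (N + 1), (c m : ℝ) / u m =
      ((∑ m ∈ range (N + 1), c m * (u n / u m) : ℕ) : ℝ) := by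
    push_cast [mul_sum]
    refine sum_congr rfl fun m hm => ?_
    rcases le_or_gt m n with hmn | hnm
    · rw [Nat.cast_div (hu.dvd_of_le hmn) (by exact_mod_cast (hu.pos m).ne')]
      ring
    · simp [hzero m hnm (Nat.lt_succ_iff.1 (mem_range.1 hm))]
  set z := ∑ m ∈ range (N + 1), c m * (u n / u m)
  have hx :
      π * u n * (∑ m ∈ range (N + 1), (c m : ℝ) / u m + T) = π * (u n * T) + z * π := by
    rw [mul_add, mul_assoc, hint]
    ring
  rw [← hsplit, hx, sin_add_nat_mul_pi, abs_mul, abs_pow, abs_neg, abs_one, one_pow, one_mul]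
  have hT0 : 0 ≤ T := tsum_nonneg fun m => by positivity
  refine abs_sin_le_abs.trans ?_
  rw [abs_of_nonneg (by positivity)]
  gcongr
  simpa [div_eq_mul_one_div (u n : ℝ)] using
    mul_le_mul_of_nonneg_left hTle (Nat.cast_nonneg (u n))

end IsArithSeq

noncomputable def nextIndex (k : ℕ → ℕ) (n : ℕ) : ℕ := sInf {i | n ≤ k i}

section nextIndex

variable {k : ℕ → ℕ}

theorem le_apply_nextIndex (hk : StrictMono k) (n : ℕ) : n ≤ k (nextIndex k n) :=
  Nat.sInf_mem (s := {i | n ≤ k i}) ⟨n, hk.le_apply⟩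

theorem apply_lt_of_lt_nextIndex {i n : ℕ} (h : i < nextIndex k n) : k i < n :=
  not_le.1 (Nat.notMem_of_lt_sInf (s := {i | n ≤ k i}) h)

theorem injective_nextIndex_sub (hk : StrictMono k) :
    Function.Injective fun n => (nextIndex k n, k (nextIndex k n) - n) := by
  intro n m h
  obtain ⟨hi, hj⟩ := Prod.mk.inj h
  have hn := le_apply_nextIndex hk n
  have hm := le_apply_nextIndex hk m
  rw [hi] at hn hj
  omega

theorem eq_zero_of_lt_of_le_nextIndex {c : ℕ → ℕ} (hk : StrictMono k)
    (hc : ∀ m, c m ≠ 0 → ∃ i, m = k i + 1) {n m : ℕ} (hnm : n < m)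
    (hmK : m ≤ k (nextIndex k n)) : c m = 0 := by
  by_contra hcm
  obtain ⟨i, rfl⟩ := hc m hcm
  have := apply_lt_of_lt_nextIndex (hk.lt_iff_lt.1 (by omega : k i < k (nextIndex k n)))
  omega

end nextIndex

theorem summable_inv_mul_sin_of_sparse_support_general
    (u : ℕ → ℕ) (humono : StrictMono u)
    (hudvd : ∀ n, u n ∣ u (n + 1))
    (k : ℕ → ℕ) (hkmono : StrictMono k)
    (hksum : Summable (fun i : ℕ => (1 : ℝ) / k i))
    (c : ℕ → ℕ)
    (hcsupp : ∀ n, c n ≠ 0 → ∃ i, n = k i + 1)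
    (hcdigit : ∀ n, 1 ≤ n → c n < u n / u (n - 1))
    (x : ℝ) (hx : x = ∑' n : ℕ, (c n : ℝ) / u n) :
    Summable (fun n : ℕ => (1 : ℝ) / n * |Real.sin (Real.pi * u n * x)|) := by
  have hu : IsArithSeq u := ⟨humono, hudvd⟩
  have hdigit (m : ℕ) : c (m + 1) < u (m + 1) / u m := by
    simpa using hcdigit (m + 1) (Nat.le_add_left 1 m)
  set G : ℕ × ℕ → ℝ := fun p => π * (1 / k p.1 * ((p.2 + 1) * (1 / 2) ^ p.2))
  have hG0 (p : ℕ × ℕ) : 0 ≤ G p := by positivity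
  have hG : Summable G :=
    (hksum.mul_of_nonneg summable_succ_mul_geometric_two (fun _ => by positivity)
      fun _ => by positivity).mul_left π
  refine Summable.of_nonneg_of_le (fun n => by positivity) (fun n => ?_)
    (hG.comp_injective (injective_nextIndex_sub hkmono))
  rcases eq_or_ne n 0 with rfl | hn
  · simpa using hG0 _
  set K := k (nextIndex k n)
  have hnK : n ≤ K := le_apply_nextIndex hkmono n
  have hsin : |sin (π * u n * x)| ≤ π * (1 / 2) ^ (K - n) := by
    rw [hx]
    refine (hu.abs_sin_pi_mul_tsum_le hdigit fun _ =>
      eq_zero_of_lt_of_le_nextIndex hkmono hcsupp).trans ?_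
    gcongr
    exact hu.div_le_half_pow hnK
  calc 1 / (n : ℝ) * |sin (π * u n * x)|
      ≤ ((K - n : ℕ) + 1) / K * (π * (1 / 2) ^ (K - n)) :=
        mul_le_mul (one_div_le_sub_add_one_div hn hnK) hsin (abs_nonneg _) (by positivity)
    _ = G (nextIndex k n, K - n) := by ring

/-- For an arithmetic sequence `u` (`u 0 = 1`, strictly increasing,
`u n ∣ u (n+1)`, ratios `q n = u n / u (n-1)`), strictly increasing indices
`(k i)` with `∑ 1 / k i < ∞`, and `x ∈ 𝕋` with canonical digits supported on
`{k i + 1 : i ∈ ℕ}`, the series `∑_{n ≥ 1} (1/n) |sin (π u n x)|` converges;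
in particular `x` lies in the `N`-set `{y : ∑ (1/n)|sin (u n π y)| < ∞}`. -/
theorem summable_inv_mul_sin_of_sparse_support
    (u : ℕ → ℕ) (hu0 : u 0 = 1) (humono : StrictMono u)
    (hudvd : ∀ n, u n ∣ u (n + 1))
    (k : ℕ → ℕ) (hkmono : StrictMono k) (hk1 : ∀ i, 1 ≤ k i)
    (hksum : Summable (fun i : ℕ => (1 : ℝ) / k i))
    (c : ℕ → ℕ)
    (hcsupp : ∀ n, c n ≠ 0 → ∃ i, n = k i + 1)
    (hcdigit : ∀ n, 1 ≤ n → c n < u n / u (n - 1))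
    (x : ℝ) (hx : x = ∑' n : ℕ, (c n : ℝ) / u n) :
    Summable (fun n : ℕ => (1 : ℝ) / n * |Real.sin (Real.pi * u n * x)|) :=
  summable_inv_mul_sin_of_sparse_support_general u humono hudvd k hkmono hksum c hcsupp hcdigit x hx
end
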